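/- arXiv:2212.12605 — 6 statements merged into one kernel-verified Lean document; each statement's English description precedes it below -/
import Mathlib

section
/- Let n be a positive integer and a an invertible element of Z/nZ. Define on X = Z/nZ the operation x*y = a·x + (1-a)·y. For any b ∈ Z/nZ, set R₁(x,y) = b·x + (1-b)·y and R₂(x,y) = a(1-b)·x + (1 - a(1-b))·y. Then (X, *, R₁, R₂) is an oriented singquandle. -/
/-- The affine singquandle on `ℤ/nℤ`: for `a` a unit and any `b`,
`x*y = a x + (1-a) y`, `R₁(x,y) = b x + (1-b) y`,
`R₂(x,y) = a(1-b) x + (1 - a(1-b)) y` form an oriented singquandle. -/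
theorem affine_singquandle
    (n : ℕ) (hn : 0 < n) (a : (ZMod n)ˣ) (b : ZMod n)
    (op bar R1 R2 : ZMod n → ZMod n → ZMod n)
    (hop : ∀ x y, op x y = (a : ZMod n) * x + (1 - (a : ZMod n)) * y)
    (hbar : ∀ x y, bar x y =
      ((a⁻¹ : (ZMod n)ˣ) : ZMod n) * x + (1 - ((a⁻¹ : (ZMod n)ˣ) : ZMod n)) * y)
    (hR1 : ∀ x y, R1 x y = b * x + (1 - b) * y)
    (hR2 : ∀ x y, R2 x y = (a : ZMod n) * (1 - b) * x +
      (1 - (a : ZMod n) * (1 - b)) * y) :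
    -- quandle axioms
    (∀ x, op x x = x) ∧
    (∀ x y, op (bar x y) y = x ∧ bar (op x y) y = x) ∧
    (∀ x y z, op (op x y) z = op (op x z) (op y z)) ∧
    -- oriented singquandle axioms
    (∀ x y z, op (R1 (bar x y) z) y = R1 x (op z y)) ∧
    (∀ x y z, R2 (bar x y) z = bar (R2 x (op z y)) y) ∧
    (∀ x y z, op (bar y (R1 x z)) x = bar (op y (R2 x z)) z) ∧
    (∀ x y, R2 x y = R1 y (op x y)) ∧
    (∀ x y, op (R1 x y) (R2 x y) = R2 y (op x y)) := by
  have ha : ((a⁻¹ : (ZMod n)ˣ) : ZMod n) * (a : ZMod n) = 1 := by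
    rw [← Units.val_mul, inv_mul_cancel, Units.val_one]
  set c : ZMod n := (a : ZMod n)
  set u : ZMod n := ((a⁻¹ : (ZMod n)ˣ) : ZMod n)
  refine ⟨fun x => ?_, fun x y => ⟨?_, ?_⟩, fun x y z => ?_, fun x y z => ?_,
    fun x y z => ?_, fun x y z => ?_, fun x y => ?_, fun x y => ?_⟩ <;>
    simp only [hop, hbar, hR1, hR2]
  · ring
  · linear_combination (x - y) * ha
  · linear_combination (x - y) * ha
  · ring
  · linear_combination (b * x - b * y) * ha
  · linear_combination (y - z + c * z - c * y - c * b * z + c * b * y) * ha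
  · linear_combination (z - x - c * z + c * x + c * b * z - c * b * x) * ha
  · ring
  · ring
end

section
/- Let G be a group with conjugation quandle operation x*y = y⁻¹xy. Define R₁(x,y) = x y x y⁻¹ x⁻¹ and R₂(x,y) = x y x⁻¹. Then (G, *, R₁, R₂) is an oriented singquandle. -/
/-- On the conjugation quandle of a group `G`, the maps
`R₁(x,y) = x y x y⁻¹ x⁻¹` and `R₂(x,y) = x y x⁻¹` make `(G,*,R₁,R₂)`
an oriented singquandle. -/
theorem conj_singquandle_two
    (G : Type*) [Group G]
    (op bar R1 R2 : G → G → G)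
    (hop : ∀ x y, op x y = y⁻¹ * x * y)
    (hbar : ∀ x y, bar x y = y * x * y⁻¹)
    (hR1 : ∀ x y, R1 x y = x * y * x * y⁻¹ * x⁻¹)
    (hR2 : ∀ x y, R2 x y = x * y * x⁻¹) :
    (∀ x y z, op (R1 (bar x y) z) y = R1 x (op z y)) ∧
    (∀ x y z, R2 (bar x y) z = bar (R2 x (op z y)) y) ∧
    (∀ x y z, op (bar y (R1 x z)) x = bar (op y (R2 x z)) z) ∧
    (∀ x y, R2 x y = R1 y (op x y)) ∧
    (∀ x y, op (R1 x y) (R2 x y) = R2 y (op x y)) := by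
  simp only [hop, hbar, hR1, hR2]
  refine ⟨fun x y z => ?_, fun x y z => ?_, fun x y z => ?_, fun x y => ?_, fun x y => ?_⟩ <;>
    group
end

section
/- Let G be a group with conjugation quandle operation x*y = y⁻¹xy. Define R₁(x,y) = y⁻¹xy and R₂(x,y) = y⁻¹x⁻¹yxy. Then (G, *, R₁, R₂) is an oriented singquandle. -/
/-- On the conjugation quandle of a group `G`, the maps
`R₁(x,y) = y⁻¹xy` and `R₂(x,y) = y⁻¹x⁻¹yxy` make `(G,*,R₁,R₂)`
an oriented singquandle. -/
theorem conj_singquandle_three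
    (G : Type*) [Group G]
    (op bar R1 R2 : G → G → G)
    (hop : ∀ x y, op x y = y⁻¹ * x * y)
    (hbar : ∀ x y, bar x y = y * x * y⁻¹)
    (hR1 : ∀ x y, R1 x y = y⁻¹ * x * y)
    (hR2 : ∀ x y, R2 x y = y⁻¹ * x⁻¹ * y * x * y) :
    (∀ x y z, op (R1 (bar x y) z) y = R1 x (op z y)) ∧
    (∀ x y z, R2 (bar x y) z = bar (R2 x (op z y)) y) ∧
    (∀ x y z, op (bar y (R1 x z)) x = bar (op y (R2 x z)) z) ∧
    (∀ x y, R2 x y = R1 y (op x y)) ∧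
    (∀ x y, op (R1 x y) (R2 x y) = R2 y (op x y)) := by
  refine ⟨?_, ?_, ?_, ?_, ?_⟩ <;> intros <;>
    simp only [hop, hbar, hR1, hR2, mul_assoc, mul_inv_rev, inv_inv] <;> group
end

section
/- Let G be a group with conjugation quandle x*y = y⁻¹xy and let n ≥ 1. Define R₁(x,y) = y(x⁻¹y)ⁿ and R₂(x,y) = (y⁻¹x)^{n+1} y. Then (G, *, R₁, R₂) is an oriented singquandle. -/
lemma conj_pow' {G : Type*} [Group G] (a b : G) (n : ℕ) :
    (b⁻¹ * a * b) ^ n = b⁻¹ * a ^ n * b := by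
  induction n with
  | zero => group
  | succ k ih => rw [pow_succ, pow_succ, ih]; group

/-- On the conjugation quandle of a group `G`, for `n ≥ 1` the maps
`R₁(x,y) = y (x⁻¹ y)ⁿ` and `R₂(x,y) = (y⁻¹ x)^(n+1) y` make `(G,*,R₁,R₂)`
an oriented singquandle. -/
theorem conj_singquandle_power
    (G : Type*) [Group G] (n : ℕ) (hn : 1 ≤ n)
    (op bar R1 R2 : G → G → G)
    (hop : ∀ x y, op x y = y⁻¹ * x * y)
    (hbar : ∀ x y, bar x y = y * x * y⁻¹)
    (hR1 : ∀ x y, R1 x y = y * (x⁻¹ * y) ^ n)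
    (hR2 : ∀ x y, R2 x y = (y⁻¹ * x) ^ (n + 1) * y) :
    (∀ x y z, op (R1 (bar x y) z) y = R1 x (op z y)) ∧
    (∀ x y z, R2 (bar x y) z = bar (R2 x (op z y)) y) ∧
    (∀ x y z, op (bar y (R1 x z)) x = bar (op y (R2 x z)) z) ∧
    (∀ x y, R2 x y = R1 y (op x y)) ∧
    (∀ x y, op (R1 x y) (R2 x y) = R2 y (op x y)) := by
  simp only [hop, hbar, hR1, hR2]
  refine ⟨fun x y z => ?_, fun x y z => ?_, fun x y z => ?_, fun x y => ?_, fun x y => ?_⟩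
  · rw [show (y*x*y⁻¹)⁻¹ * z = y*x⁻¹*y⁻¹*z from by group,
      show x⁻¹*(y⁻¹*z*y) = y⁻¹*(y*x⁻¹*y⁻¹*z)*y from by group, conj_pow']
    generalize (y*x⁻¹*y⁻¹*z)^n = w
    group
  · rw [show (y⁻¹*z*y)⁻¹ * x = y⁻¹*z⁻¹*y*x from by group,
      show z⁻¹*(y*x*y⁻¹) = y⁻¹⁻¹ * (y⁻¹*z⁻¹*y*x) * y⁻¹ from by group, conj_pow']
    generalize (y⁻¹*z⁻¹*y*x)^(n+1) = w
    group
  · rw [show (z⁻¹*x)^(n+1) = (z⁻¹*x)^n * (z⁻¹*x) from pow_succ _ _,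
      show z⁻¹*x = (x⁻¹*z)⁻¹ from by group, inv_pow]
    generalize (x⁻¹*z)^n = w
    group
  · rw [show y⁻¹*(y⁻¹*x*y) = y⁻¹*(y⁻¹*x)*y from by group, conj_pow',
      show (y⁻¹*x)^(n+1) = (y⁻¹*x) * (y⁻¹*x)^n from pow_succ' _ _]
    generalize (y⁻¹*x)^n = w
    group
  · rw [show (y⁻¹*x*y)⁻¹*y = y⁻¹*(x⁻¹*y)*y from by group, conj_pow',
      show y⁻¹*x = (x⁻¹*y)⁻¹ from by group, inv_pow,
      show (x⁻¹*y)^(n+1) = (x⁻¹*y) * (x⁻¹*y)^n from pow_succ' _ _]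
    generalize (x⁻¹*y)^n = w
    group
end

section
/- Let X be a module over Z[t^{±1}, v] with quandle operation x*y = t·x+(1-t)·y. For scalars a,b,c,d,e,f set α = a·t+b·v+c·t·v and β = d·t+f·v+e·t·v. Define R₁(x,y) = α·x+(1-α)·y, R₂(x,y) = t(1-α)·x+(1-t(1-α))·y, R₃(x,y) = (1-β)·x+β·y, and R₄(x,y) = (1-t(1-β))·x+t(1-β)·y. Then (X, *, R₁, R₂, R₃, R₄) is an oriented stuquandle (the Alexander oriented stuquandle). -/
open Polynomial LaurentPolynomial in
/-- The Alexander oriented stuquandle: `X` a module over `ℤ[t^{±1}, v]`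
(realized as `(ℤ[t,t⁻¹])[v]`), with the indicated affine maps, is an
oriented stuquandle. Here `t = C (T 1)`, `t⁻¹ = C (T (-1))`, `v = X`. -/
theorem alexander_stuquandle
    (M : Type*) [AddCommGroup M]
    [Module (Polynomial (LaurentPolynomial ℤ)) M]
    (a b c d e f : Polynomial (LaurentPolynomial ℤ))
    (t tinv v α β : Polynomial (LaurentPolynomial ℤ))
    (ht : t = Polynomial.C (LaurentPolynomial.T 1))
    (htinv : tinv = Polynomial.C (LaurentPolynomial.T (-1)))
    (hv : v = Polynomial.X)
    (hα : α = a * t + b * v + c * t * v)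
    (hβ : β = d * t + f * v + e * t * v)
    (op bar R1 R2 R3 R4 : M → M → M)
    (hop : ∀ x y, op x y = t • x + (1 - t) • y)
    (hbar : ∀ x y, bar x y = tinv • x + (1 - tinv) • y)
    (hR1 : ∀ x y, R1 x y = α • x + (1 - α) • y)
    (hR2 : ∀ x y, R2 x y = (t * (1 - α)) • x + (1 - t * (1 - α)) • y)
    (hR3 : ∀ x y, R3 x y = (1 - β) • x + β • y)
    (hR4 : ∀ x y, R4 x y = (1 - t * (1 - β)) • x + (t * (1 - β)) • y) :
    -- oriented singquandle axioms
    (∀ x y z, op (R1 (bar x y) z) y = R1 x (op z y)) ∧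
    (∀ x y z, R2 (bar x y) z = bar (R2 x (op z y)) y) ∧
    (∀ x y z, op (bar y (R1 x z)) x = bar (op y (R2 x z)) z) ∧
    (∀ x y, R2 x y = R1 y (op x y)) ∧
    (∀ x y, op (R1 x y) (R2 x y) = R2 y (op x y)) ∧
    -- stuquandle axioms for R₃, R₄
    (∀ x y, op (R3 y x) (R4 y x) = R4 (op x y) y) ∧
    (∀ x y, R4 y x = R3 (op x y) y) ∧
    (∀ x y z, R3 (op y x) z = op (R3 y (bar z x)) x) ∧
    (∀ x y z, R4 y (bar z x) = bar (R4 (op y x) z) x) ∧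
    (∀ x y z, bar (op x (R4 y z)) y = op (bar x (R3 y z)) z) := by
  have hti : t * tinv = 1 := by
    subst ht htinv
    rw [← Polynomial.C_mul, ← LaurentPolynomial.T_add]
    norm_num
  simp only [hop, hbar, hR1, hR2, hR3, hR4]
  refine ⟨?_, ?_, ?_, ?_, ?_, ?_, ?_, ?_, ?_, ?_⟩ <;> intros
  · match_scalars <;>
      first
        | ring1
        | linear_combination α * hti
        | linear_combination (-α) * hti
  · match_scalars <;>
      first
        | ring1
        | linear_combination (1 - t * (1 - α)) * hti
        | linear_combination (-(1 - t * (1 - α))) * hti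
  · match_scalars <;>
      first
        | ring1
        | linear_combination (1 - t + t * α) * hti
        | linear_combination (-(1 - t + t * α)) * hti
  · match_scalars <;> ring1
  · match_scalars <;> ring1
  · match_scalars <;> ring1
  · match_scalars <;> ring1
  · match_scalars <;>
      first
        | ring1
        | linear_combination β * hti
        | linear_combination (-β) * hti
  · match_scalars <;>
      first
        | ring1
        | linear_combination (1 - t * (1 - β)) * hti
        | linear_combination (-(1 - t * (1 - β))) * hti
  · match_scalars <;>
      first
        | ring1
        | linear_combination (-(1 - t * (1 - β))) * hti
        | linear_combination (1 - t + t * β) * hti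
end

section
/- Let n be a positive integer and a,b,e ∈ Z/nZ with a invertible. In the affine stuquandle on Z/nZ with x*y = a·x+(1-a)·y, R₃(x,y) = (1-e)·x+e·y, R₄(x,y) = (1-a(1-e))·x+a(1-e)·y, the identities R₄(y,x) = R₃(x*y, y) and R₃(y,x)*R₄(y,x) = R₄(x*y, y) hold for all x,y ∈ Z/nZ. -/
/-- In the affine stuquandle on `ℤ/nℤ`, axioms (6) and (7) hold:
`R₄(y,x) = R₃(x*y,y)` and `R₃(y,x)*R₄(y,x) = R₄(x*y,y)`. -/
theorem affine_stuquandle_axioms_6_7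
    (n : ℕ) (hn : 0 < n) (a : (ZMod n)ˣ) (b e : ZMod n)
    (op R3 R4 : ZMod n → ZMod n → ZMod n)
    (hop : ∀ x y, op x y = (a : ZMod n) * x + (1 - (a : ZMod n)) * y)
    (hR3 : ∀ x y, R3 x y = (1 - e) * x + e * y)
    (hR4 : ∀ x y, R4 x y = (1 - (a : ZMod n) * (1 - e)) * x +
      (a : ZMod n) * (1 - e) * y) :
    (∀ x y, R4 y x = R3 (op x y) y) ∧
    (∀ x y, op (R3 y x) (R4 y x) = R4 (op x y) y) := by
  constructor <;> intro x y <;> simp only [hop, hR3, hR4] <;> ring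
end
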